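/- Let a ∈ ℂ with a ≠ 1 and a ≠ −1. In the quotient V = (L × L)/range(T) for the quartic curve u² = x⁴ − 2ax² + 1, the two classes [1] (the class of (1, 0)) and [X²] (the class of (X², 0)) are linearly independent over ℂ. In particular the even-positive sector of A/∂A is not generated by a single element. -/

import Mathlib

/-!
If `s • [1] + t • [X²]` lies in `range T`, then `s + t X² = P g' + (P'/2) g` for a Laurent
polynomial `g`. Comparing coefficients, the top coefficient of `g` in a positive degree `m` would
reappear with the nonzero factor `m + 2` in degree `m + 3 ≥ 4`, and the bottom coefficient in a
negative degree `m` with the factor `m` in degree `m - 1 ≤ -2`; so `g` is a constant, and the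
coefficients of `P g' + (P'/2) g` in degrees `0` and `2` vanish.
-/

open LaurentPolynomial

/-- The linear map `T(f,g) = (p * D g + w * g, D f)` on `L × L`, encoding the distinguished
derivation of the superelliptic algebra (even part `L`, odd part `L * u`), where `p = P`
and `w` is the odd-weight term `u * u' = P'/2`. -/
noncomputable def Tgen (p w : LaurentPolynomial ℂ)
    (D : LaurentPolynomial ℂ →ₗ[ℂ] LaurentPolynomial ℂ) :
    (LaurentPolynomial ℂ × LaurentPolynomial ℂ) →ₗ[ℂ]
      (LaurentPolynomial ℂ × LaurentPolynomial ℂ) where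
  toFun fg := (p * D fg.2 + w * fg.2, D fg.1)
  map_add' x y := by
    ext
    · simp only [Prod.fst_add, Prod.snd_add, map_add]
      ring_nf
    · simp [Prod.snd_add]
  map_smul' c x := by
    ext
    · simp only [Prod.smul_fst, Prod.smul_snd, map_smul, smul_add, mul_smul_comm,
        RingHom.id_apply]
    · simp

/-- The derivation map for the quartic curve: `P = X^4 - 2aX^2 + 1`, `P'/2 = 2X^3 - 2aX`. -/
noncomputable def Tquart (a : ℂ)
    (D : LaurentPolynomial ℂ →ₗ[ℂ] LaurentPolynomial ℂ) :
    (LaurentPolynomial ℂ × LaurentPolynomial ℂ) →ₗ[ℂ]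
      (LaurentPolynomial ℂ × LaurentPolynomial ℂ) :=
  Tgen (T 4 - 2 * C a * T 2 + 1) (2 * T 3 - 2 * C a * T 1) D

namespace LaurentPolynomial

variable {R : Type*}

lemma coeff_T_mul [Semiring R] (n k : ℤ) (f : R[T;T⁻¹]) :
    (T n * f).coeff k = f.coeff (k - n) := by
  rw [T, AddMonoidAlgebra.coeff_single_mul_apply, one_mul, neg_add_eq_sub]

lemma coeff_C_mul [Semiring R] (c : R) (k : ℤ) (f : R[T;T⁻¹]) :
    (C c * f).coeff k = c * f.coeff k := by
  rw [← smul_eq_C_mul]; rfl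

lemma coeff_eq_mul_coeff_succ_of_map_T [CommRing R] (D : R[T;T⁻¹] →ₗ[R] R[T;T⁻¹])
    (hD : ∀ n : ℤ, D (T n) = (n : R) • T (n - 1)) (f : R[T;T⁻¹]) (k : ℤ) :
    (D f).coeff k = (k + 1) * f.coeff (k + 1) := by
  induction f using LaurentPolynomial.induction_on' with
  | add p q hp hq =>
    simp only [map_add, AddMonoidAlgebra.coeff_add, Finsupp.add_apply, hp, hq]
    ring
  | C_mul_T n c =>
    simp only [← smul_eq_C_mul, map_smul, hD, AddMonoidAlgebra.coeff_smul_apply, T_apply]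
    by_cases h : n = k + 1
    · subst h; simp [mul_comm]
    · rw [if_neg (by omega), if_neg h]; simp

end LaurentPolynomial

/-- `quarticCoeff a c k` is the `k`-th coefficient of `P g' + (P'/2) g` when `g` has coefficients
`c`, for `P = X⁴ - 2aX² + 1`. -/
def quarticCoeff (a : ℂ) (c : ℤ → ℂ) (k : ℤ) : ℂ :=
  (k - 1) * c (k - 3) - 2 * a * k * c (k - 1) + (k + 1) * c (k + 1)

lemma coeff_Tquart_fst (a : ℂ) {D : LaurentPolynomial ℂ →ₗ[ℂ] LaurentPolynomial ℂ}
    (hD : ∀ n : ℤ, D (T n) = (n : ℂ) • T (n - 1)) (f g : LaurentPolynomial ℂ) (k : ℤ) :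
    (Tquart a D (f, g)).1.coeff k = quarticCoeff a g.coeff k := by
  simp only [Tquart, Tgen, LinearMap.coe_mk, AddHom.coe_mk, add_mul, sub_mul, mul_assoc, two_mul,
    AddMonoidAlgebra.coeff_add, AddMonoidAlgebra.coeff_sub, Finsupp.add_apply, Finsupp.sub_apply,
    coeff_T_mul, coeff_C_mul, one_mul, coeff_eq_mul_coeff_succ_of_map_T D hD, quarticCoeff]
  rw [show k - 4 + 1 = k - 3 by ring, show k - 2 + 1 = k - 1 by ring]
  push_cast
  ring

section quarticCoeff

variable {a : ℂ} {c : ℤ →₀ ℂ}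

/-- A top coefficient `c m` with `m ≥ 1` survives in degree `m + 3` with the factor `m + 2`. -/
lemma support_nonpos_of_quarticCoeff (h : ∀ k, 4 ≤ k → quarticCoeff a c k = 0) :
    ∀ j ∈ c.support, j ≤ 0 := by
  intro j hj
  by_contra! hj_pos
  set m := c.support.max' ⟨j, hj⟩
  have hjm : j ≤ m := c.support.le_max' j hj
  have hcm : c m ≠ 0 := Finsupp.mem_support_iff.1 (c.support.max'_mem _)
  have hgt : ∀ i, m < i → c i = 0 := fun i hi =>
    Finsupp.notMem_support_iff.1 fun hi' => (c.support.le_max' i hi').not_gt hi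
  have hrec := h (m + 3) (by omega)
  rw [quarticCoeff, hgt (m + 3 - 1) (by omega), hgt (m + 3 + 1) (by omega),
    show m + 3 - 3 = m by ring] at hrec
  have hm2 : (m + 2 : ℂ) ≠ 0 := by exact_mod_cast (show m + 2 ≠ 0 by omega)
  exact hcm <| (mul_eq_zero.1 (by push_cast at hrec; linear_combination hrec)).resolve_left hm2

/-- A bottom coefficient `c m` with `m ≤ -1` survives in degree `m - 1` with the factor `m`. -/
lemma support_nonneg_of_quarticCoeff (h : ∀ k, k ≤ -2 → quarticCoeff a c k = 0) :
    ∀ j ∈ c.support, 0 ≤ j := by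
  intro j hj
  by_contra! hj_neg
  set m := c.support.min' ⟨j, hj⟩
  have hmj : m ≤ j := c.support.min'_le j hj
  have hcm : c m ≠ 0 := Finsupp.mem_support_iff.1 (c.support.min'_mem _)
  have hlt : ∀ i, i < m → c i = 0 := fun i hi =>
    Finsupp.notMem_support_iff.1 fun hi' => (c.support.min'_le i hi').not_gt hi
  have hrec := h (m - 1) (by omega)
  rw [quarticCoeff, hlt (m - 1 - 3) (by omega), hlt (m - 1 - 1) (by omega),
    show m - 1 + 1 = m by ring] at hrec
  have hm : (m : ℂ) ≠ 0 := by exact_mod_cast (show m ≠ 0 by omega)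
  exact hcm <| (mul_eq_zero.1 (by push_cast at hrec; linear_combination hrec)).resolve_left hm

lemma eq_zero_of_quarticCoeff (h : ∀ k, k ≠ 0 → k ≠ 2 → quarticCoeff a c k = 0) {j : ℤ}
    (hj : j ≠ 0) : c j = 0 := by
  by_contra hcj
  have hmem := Finsupp.mem_support_iff.2 hcj
  have := support_nonpos_of_quarticCoeff (fun k hk => h k (by omega) (by omega)) j hmem
  have := support_nonneg_of_quarticCoeff (fun k hk => h k (by omega) (by omega)) j hmem
  omega

end quarticCoeff

theorem quartic_even_sector_independent_general (a : ℂ)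
    (D : LaurentPolynomial ℂ →ₗ[ℂ] LaurentPolynomial ℂ)
    (hD : ∀ n : ℤ, D (T n) = (n : ℂ) • T (n - 1)) :
    LinearIndependent ℂ
      ![(LinearMap.range (Tquart a D)).mkQ (1, 0),
        (LinearMap.range (Tquart a D)).mkQ (T 2, 0)] := by
  rw [LinearIndependent.pair_iff]
  intro s t hst
  obtain ⟨⟨f, g⟩, hfg⟩ :
      s • ((1 : ℂ[T;T⁻¹]), (0 : ℂ[T;T⁻¹])) + t • (T 2, 0) ∈ LinearMap.range (Tquart a D) := by
    rwa [← map_smul, ← map_smul, ← map_add, Submodule.mkQ_apply,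
      Submodule.Quotient.mk_eq_zero] at hst
  have hrec (k : ℤ) :
      quarticCoeff a g.coeff k = (if k = 0 then s else 0) + (if k = 2 then t else 0) := by
    rw [← coeff_Tquart_fst a hD f g, hfg]
    simp [← T_zero, T_apply, eq_comm]
  have hg {j : ℤ} (hj : j ≠ 0) : g.coeff j = 0 :=
    eq_zero_of_quarticCoeff (fun k hk0 hk2 => by rw [hrec, if_neg hk0, if_neg hk2, add_zero]) hj
  constructor
  · simpa [quarticCoeff, hg] using (hrec 0).symm
  · simpa [quarticCoeff, hg] using (hrec 2).symm

/-- for `a ≠ ±1`, the classes `[1]` and `[X²]` are linearly independent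
in the quotient `V` for the quartic curve; the even-positive sector is not generated by a
single element. -/
theorem quartic_even_sector_independent (a : ℂ) (ha1 : a ≠ 1) (ha2 : a ≠ -1)
    (D : LaurentPolynomial ℂ →ₗ[ℂ] LaurentPolynomial ℂ)
    (hD : ∀ n : ℤ, D (T n) = (n : ℂ) • T (n - 1)) :
    LinearIndependent ℂ
      ![(LinearMap.range (Tquart a D)).mkQ (1, 0),
        (LinearMap.range (Tquart a D)).mkQ (T 2, 0)] :=
  quartic_even_sector_independent_general a D hD
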